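/- Let C(x) = x + x² + 4x³ + ... be the generating function of connected rooted chord diagrams (satisfying 2xCC' = C(1+C) - x) and define y(x) := (x - C_{≥2}(x))²/x, where C_{≥2} is defined by C = C²/x - C_{≥2}(C²/x). Then y is the compositional inverse of x ↦ C(x)²/x, and C(y(x)) = x - C_{≥2}(x). -/

import Mathlib

open PowerSeries Finset

/-- Composition `f(g(X))` of formal power series (meaningful when `g` has zero
constant term). -/
noncomputable def pcomp (f g : ℚ⟦X⟧) : ℚ⟦X⟧ :=
  PowerSeries.mk fun n => ∑ k ∈ Finset.range (n + 1),
    PowerSeries.coeff k f * PowerSeries.coeff n (g ^ k)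

/-- Division of a power series by `X` (dropping the constant term). -/
noncomputable def shiftDiv (f : ℚ⟦X⟧) : ℚ⟦X⟧ :=
  PowerSeries.mk fun n => PowerSeries.coeff (n + 1) f

/-! Write `A = C²/x` and `W = x - C_{≥2}`, so that `y = W²/x` and the functional equation reads
`C = W(A)`. Then `A · y(A) = W(A)² = C² = x · A`, hence `y(A) = x`. A one-sided compositional
inverse of a series `u x + O(x²)` with `u` a unit is two-sided, so also `A(y) = x`, and finally
`C(y) = W(A(y)) = W`. -/

lemma coeff_shiftDiv (f : ℚ⟦X⟧) (n : ℕ) : coeff n (shiftDiv f) = coeff (n + 1) f :=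
  coeff_mk _ _

lemma X_mul_shiftDiv {f : ℚ⟦X⟧} (hf : constantCoeff f = 0) : X * shiftDiv f = f := by
  ext (_ | n)
  · rw [coeff_zero_X_mul, coeff_zero_eq_constantCoeff, hf]
  · rw [coeff_succ_X_mul, coeff_shiftDiv]

lemma shiftDiv_sq {f : ℚ⟦X⟧} (hf : constantCoeff f = 0) :
    shiftDiv (f ^ 2) = X * shiftDiv f ^ 2 := by
  have hf2 : constantCoeff (f ^ 2) = 0 := by rw [map_pow, hf, zero_pow two_ne_zero]
  refine mul_left_cancel₀ X_ne_zero ?_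
  rw [X_mul_shiftDiv hf2]
  conv_lhs => rw [← X_mul_shiftDiv hf]
  ring

lemma constantCoeff_shiftDiv_sq {f : ℚ⟦X⟧} (hf : constantCoeff f = 0) :
    constantCoeff (shiftDiv (f ^ 2)) = 0 := by
  rw [shiftDiv_sq hf, map_mul, constantCoeff_X, zero_mul]

lemma coeff_one_shiftDiv_sq {f : ℚ⟦X⟧} (hf : constantCoeff f = 0) :
    coeff 1 (shiftDiv (f ^ 2)) = coeff 1 f ^ 2 := by
  rw [shiftDiv_sq hf, coeff_succ_X_mul, coeff_zero_eq_constantCoeff_apply, map_pow,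
    ← coeff_zero_eq_constantCoeff_apply, coeff_shiftDiv]

lemma pcomp_eq_subst (f : ℚ⟦X⟧) {g : ℚ⟦X⟧} (hg : constantCoeff g = 0) :
    pcomp f g = f.subst g := by
  ext n
  rw [coeff_subst' (HasSubst.of_constantCoeff_zero' hg), pcomp, coeff_mk]
  refine (finsum_eq_sum_of_support_subset _ fun d hd => ?_).symm
  rw [coe_range, Set.mem_Iio, Nat.lt_succ_iff]
  by_contra! hnd
  have hlt : (n : ℕ∞) < (g ^ d).order :=
    (Nat.cast_lt.2 hnd).trans_le (le_order_pow_of_constantCoeff_eq_zero d hg)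
  exact hd (mul_eq_zero_of_right _ (coeff_of_lt_order n hlt))

theorem PowerSeries.subst_eq_X_of_subst_eq_X {R : Type*} [CommRing R] {P Q : R⟦X⟧}
    (hP0 : constantCoeff P = 0) (hP1 : IsUnit (coeff 1 P))
    (h : Q.subst P = X) : P.subst Q = X := by
  have hQB : Q = P.substInvOfIsUnit hP1 := calc
    Q = Q.subst (P.subst (P.substInvOfIsUnit hP1)) := by
      rw [subst_substInvOfIsUnit_right _ hP0, X_subst]
    _ = P.substInvOfIsUnit hP1 := by
      rw [← subst_comp_subst_apply (.of_constantCoeff_zero' hP0) (.substInvOfIsUnit _ hP1), h,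
        subst_X (.substInvOfIsUnit _ hP1)]
  rw [hQB, subst_substInvOfIsUnit_right _ hP0]

lemma mul_subst_shiftDiv {f g : ℚ⟦X⟧} (hf : constantCoeff f = 0) (hg : constantCoeff g = 0) :
    g * (shiftDiv f).subst g = f.subst g := by
  conv_rhs => rw [← X_mul_shiftDiv hf]
  rw [subst_mul (.of_constantCoeff_zero' hg), subst_X (.of_constantCoeff_zero' hg)]

theorem compositional_inverse_y_general (C C₂ : ℚ⟦X⟧)
    (hC0 : PowerSeries.constantCoeff C = 0) (hC1 : PowerSeries.coeff 1 C = 1)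
    (h20 : PowerSeries.coeff 0 C₂ = 0)
    (hfun : C = shiftDiv (C ^ 2) - pcomp C₂ (shiftDiv (C ^ 2))) :
    pcomp (shiftDiv (C ^ 2)) (shiftDiv ((X - C₂) ^ 2)) = X ∧
    pcomp (shiftDiv ((X - C₂) ^ 2)) (shiftDiv (C ^ 2)) = X ∧
    pcomp C (shiftDiv ((X - C₂) ^ 2)) = X - C₂ := by
  set A := shiftDiv (C ^ 2)
  set W := X - C₂
  set Y := shiftDiv (W ^ 2)
  have hW0 : constantCoeff W = 0 := by
    rw [map_sub, constantCoeff_X, ← coeff_zero_eq_constantCoeff_apply, h20, sub_zero]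
  have hA0 : constantCoeff A = 0 := constantCoeff_shiftDiv_sq hC0
  have hA1 : coeff 1 A = 1 := by rw [coeff_one_shiftDiv_sq hC0, hC1, one_pow]
  have hY0 : constantCoeff Y = 0 := constantCoeff_shiftDiv_sq hW0
  have hCW : C = W.subst A := by
    rw [hfun, pcomp_eq_subst _ hA0, subst_sub (.of_constantCoeff_zero' hA0),
      subst_X (.of_constantCoeff_zero' hA0)]
  have hYA : Y.subst A = X := by
    have hA_ne : A ≠ 0 := by
      rintro h
      simp [h] at hA1
    refine mul_left_cancel₀ hA_ne ?_
    rw [mul_subst_shiftDiv (by rw [map_pow, hW0, zero_pow two_ne_zero]) hA0,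
      subst_pow (.of_constantCoeff_zero' hA0), ← hCW, ← X_mul_shiftDiv (f := C ^ 2)
      (by rw [map_pow, hC0, zero_pow two_ne_zero]), mul_comm]
  have hAY : A.subst Y = X := subst_eq_X_of_subst_eq_X hA0 (by rw [hA1]; exact isUnit_one) hYA
  refine ⟨?_, ?_, ?_⟩
  · rw [pcomp_eq_subst _ hY0, hAY]
  · rw [pcomp_eq_subst _ hA0, hYA]
  · rw [pcomp_eq_subst _ hY0, hCW, subst_comp_subst_apply (.of_constantCoeff_zero' hA0)
      (.of_constantCoeff_zero' hY0), hAY, X_subst]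

/-- With `C` the connected chord diagram series and `C_{≥2}` defined by
`C = C²/x - C_{≥2}(C²/x)`, the series `y(x) = (x - C_{≥2}(x))²/x` is the
compositional inverse of `x ↦ C(x)²/x`, and `C(y(x)) = x - C_{≥2}(x)`. -/
theorem compositional_inverse_y (C C₂ : ℚ⟦X⟧)
    (hC0 : PowerSeries.constantCoeff C = 0) (hC1 : PowerSeries.coeff 1 C = 1)
    (h20 : PowerSeries.coeff 0 C₂ = 0) (h21 : PowerSeries.coeff 1 C₂ = 0)
    (hode : 2 * X * C * d⁄dX ℚ C = C * (1 + C) - X)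
    (hfun : C = shiftDiv (C ^ 2) - pcomp C₂ (shiftDiv (C ^ 2))) :
    pcomp (shiftDiv (C ^ 2)) (shiftDiv ((X - C₂) ^ 2)) = X ∧
    pcomp (shiftDiv ((X - C₂) ^ 2)) (shiftDiv (C ^ 2)) = X ∧
    pcomp C (shiftDiv ((X - C₂) ^ 2)) = X - C₂ :=
  compositional_inverse_y_general C C₂ hC0 hC1 h20 hfun
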